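/- arXiv:2604.13837 — 11 statements merged into one kernel-verified Lean document; each statement's English description precedes it below -/
import Mathlib

section
/- Let τ1, τ2, κ, μ > 0 and let p̃, ẽ, s̃ : (0,∞)×(0,∞) → ℝ be C¹ functions satisfying ∂_v s̃(v,θ) = ∂_θ p̃(v,θ), ∂_θ s̃(v,θ) = (1/θ)∂_θ ẽ(v,θ), and ∂_v ẽ(v,θ) = θ ∂_θ p̃(v,θ) − p̃(v,θ) for all v, θ > 0. Suppose (v,u,θ,q,S) are C¹ real-valued functions of (t,x) on an open subset U of ℝ², with v > 0 and θ > 0 and ∂_θ ẽ(v,θ) − τ1 v q²/(κθ²) > 0 pointwise on U, which satisfy on U the hyperbolic Navier–Stokes system ∂_t v − ∂_x u = 0; ∂_t u + ∂_x p = ∂_x S; ∂_t(e + u²/2) + ∂_x(u p) + ∂_x q = ∂_x(u S); τ1 ∂_t q + q + κ ∂_x θ / v = 0; τ2 ∂_t S + S = μ ∂_x u / v, where p = p̃(v,θ) − τ1 q²/(2κθ) − τ2 S²/(2μ) and e = ẽ(v,θ) + τ1 v q²/(κθ) + τ2 v S²/(2μ). Then the entropy s := s̃(v,θ) + τ1 v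 q²/(2κθ²) satisfies, pointwise on U, the identity ∂_t s + ∂_x(q/θ) = v q²/(κθ²) + v S²/(μθ). -/
/-!
Subtracting `u` times the momentum equation from the energy equation leaves the internal energy
balance `∂ₜe + p ∂ₓu + ∂ₓq = S ∂ₓu`. The classical Gibbs relations `θ ds̃ = dẽ + p̃ dv` extend to
the relaxed quantities as `θ ds = de + p dv - (τ₁ v q / (κ θ)) dq - (τ₂ v S / μ) dS`. Inserting the
balance, the mass equation for `∂ₜv`, Cattaneo's law for `τ₁ ∂ₜq` and Maxwell's law for `τ₂ ∂ₜS`,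
the stress work `S ∂ₓu` cancels and `θ ∂ₜs` becomes `-θ ∂ₓ(q/θ) + v q²/(κθ) + v S²/μ`.
-/

/-- Partial derivative in the first variable (time t, or volume v). -/
noncomputable def d1 (f : ℝ × ℝ → ℝ) (y : ℝ × ℝ) : ℝ := fderiv ℝ f y (1, 0)

/-- Partial derivative in the second variable (space x, or temperature θ). -/
noncomputable def d2 (f : ℝ × ℝ → ℝ) (y : ℝ × ℝ) : ℝ := fderiv ℝ f y (0, 1)

open ContinuousLinearMap

theorem HasFDerivAt.fun_div {𝕜 E : Type*} [NontriviallyNormedField 𝕜] [NormedAddCommGroup E]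
    [NormedSpace 𝕜 E] {f g : E → 𝕜} {f' g' : E →L[𝕜] 𝕜} {y : E}
    (hf : HasFDerivAt f f' y) (hg : HasFDerivAt g g' y) (hy : g y ≠ 0) :
    HasFDerivAt (fun x => f x / g x) ((g y ^ 2)⁻¹ • (g y • f' - f y • g')) y := by
  simp only [div_eq_mul_inv]
  refine (hf.mul ((hasDerivAt_inv hy).comp_hasFDerivAt y hg)).congr_fderiv ?_
  ext w
  simp only [add_apply, smul_apply, sub_apply, smul_eq_mul, Function.comp_apply]
  field_simp
  ring

theorem fderiv_fun_div_apply {𝕜 E : Type*} [NontriviallyNormedField 𝕜] [NormedAddCommGroup E]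
    [NormedSpace 𝕜 E] {f g : E → 𝕜} {y : E} (hf : DifferentiableAt 𝕜 f y)
    (hg : DifferentiableAt 𝕜 g y) (hy : g y ≠ 0) (w : E) :
    fderiv 𝕜 (fun x => f x / g x) y w
      = (g y * fderiv 𝕜 f y w - f y * fderiv 𝕜 g y w) / g y ^ 2 := by
  rw [(hf.hasFDerivAt.fun_div hg.hasFDerivAt hy).fderiv, smul_apply, sub_apply, smul_apply,
    smul_apply, smul_eq_mul, smul_eq_mul, smul_eq_mul, inv_mul_eq_div]

theorem ContinuousLinearMap.comp_prod_apply_eq {E : Type*} [NormedAddCommGroup E] [NormedSpace ℝ E]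
    (L : ℝ × ℝ →L[ℝ] ℝ) (A B : E →L[ℝ] ℝ) (w : E) :
    L.comp (A.prod B) w = A w * L (1, 0) + B w * L (0, 1) := by
  have h : (A w, B w) = A w • ((1 : ℝ), (0 : ℝ)) + B w • ((0 : ℝ), (1 : ℝ)) := by simp
  rw [comp_apply, prod_apply, h, map_add, map_smul, map_smul, smul_eq_mul, smul_eq_mul]

theorem internal_energy_balance {e p u q S : ℝ × ℝ → ℝ} {y : ℝ × ℝ}
    (he : DifferentiableAt ℝ e y) (hp : DifferentiableAt ℝ p y) (hu : DifferentiableAt ℝ u y)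
    (hS : DifferentiableAt ℝ S y)
    (henergy : d1 (fun x => e x + u x ^ 2 / 2) y + d2 (fun x => u x * p x) y + d2 q y
      = d2 (fun x => u x * S x) y)
    (hmom : d1 u y + d2 p y = d2 S y) :
    d1 e y + p y * d2 u y + d2 q y = S y * d2 u y := by
  have hkinetic : d1 (fun x => e x + u x ^ 2 / 2) y = d1 e y + u y * d1 u y := by
    have h : HasFDerivAt (fun x => e x + u x ^ 2 / 2) _ y :=
      he.hasFDerivAt.add ((hu.hasFDerivAt.pow 2).fun_div (hasFDerivAt_const 2 y) two_ne_zero)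
    rw [d1, h.fderiv]
    simp only [add_apply, smul_apply, smul_eq_mul, nsmul_eq_mul, smul_zero, sub_zero,
      Nat.cast_ofNat, Nat.add_one_sub_one, pow_one, d1]
    ring
  have hwork : d2 (fun x => u x * p x) y = u y * d2 p y + p y * d2 u y := by
    rw [d2, fderiv_fun_mul hu hp]
    simp [d2]
  have hpower : d2 (fun x => u x * S x) y = u y * d2 S y + S y * d2 u y := by
    rw [d2, fderiv_fun_mul hu hS]
    simp [d2]
  rw [hkinetic, hwork, hpower] at henergy
  linear_combination henergy - u y * hmom

section Thermodynamics

variable {E : Type*} [NormedAddCommGroup E] [NormedSpace ℝ E]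
variable (τ1 τ2 κ μ : ℝ) (pt et st : ℝ × ℝ → ℝ) (v θ q S : E → ℝ)

noncomputable def pressure (x : E) : ℝ :=
  pt (v x, θ x) - τ1 * q x ^ 2 / (2 * κ * θ x) - τ2 * S x ^ 2 / (2 * μ)

noncomputable def internalEnergy (x : E) : ℝ :=
  et (v x, θ x) + τ1 * v x * q x ^ 2 / (κ * θ x) + τ2 * v x * S x ^ 2 / (2 * μ)

noncomputable def entropy (x : E) : ℝ :=
  st (v x, θ x) + τ1 * v x * q x ^ 2 / (2 * κ * θ x ^ 2)

variable {τ1 τ2 κ μ pt et st v θ q S}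

theorem gibbs_relation_fderiv {y : E} (hv : DifferentiableAt ℝ v y) (hθ : DifferentiableAt ℝ θ y)
    (hq : DifferentiableAt ℝ q y) (hS : DifferentiableAt ℝ S y)
    (het : DifferentiableAt ℝ et (v y, θ y)) (hst : DifferentiableAt ℝ st (v y, θ y))
    (hGibbs1 : d1 st (v y, θ y) = d2 pt (v y, θ y))
    (hGibbs2 : d2 st (v y, θ y) = 1 / θ y * d2 et (v y, θ y))
    (hGibbs3 : d1 et (v y, θ y) = θ y * d2 pt (v y, θ y) - pt (v y, θ y))
    (hθ0 : θ y ≠ 0) (hκ : κ ≠ 0) (hμ : μ ≠ 0) (w : E) :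
    θ y * fderiv ℝ (entropy τ1 κ st v θ q) y w
      = fderiv ℝ (internalEnergy τ1 τ2 κ μ et v θ q S) y w
        + pressure τ1 τ2 κ μ pt v θ q S y * fderiv ℝ v y w
        - τ1 * v y * q y / (κ * θ y) * fderiv ℝ q y w
        - τ2 * v y * S y / μ * fderiv ℝ S y w := by
  have hvθ := hv.hasFDerivAt.prodMk hθ.hasFDerivAt
  have hvq2 := (hv.hasFDerivAt.const_mul τ1).mul (hq.hasFDerivAt.pow 2)
  have hs : HasFDerivAt (entropy τ1 κ st v θ q) _ y := (hst.hasFDerivAt.comp y hvθ).add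
    (hvq2.fun_div ((hθ.hasFDerivAt.pow 2).const_mul (2 * κ)) (by simp [hκ, hθ0]))
  have he : HasFDerivAt (internalEnergy τ1 τ2 κ μ et v θ q S) _ y :=
    ((het.hasFDerivAt.comp y hvθ).add
      (hvq2.fun_div (hθ.hasFDerivAt.const_mul κ) (mul_ne_zero hκ hθ0))).add
      (((hv.hasFDerivAt.const_mul τ2).mul (hS.hasFDerivAt.pow 2)).fun_div
        (hasFDerivAt_const (2 * μ) y) (by simp [hμ]))
  rw [hs.fderiv, he.fderiv, pressure]
  simp only [d1, d2] at hGibbs1 hGibbs2 hGibbs3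
  simp only [add_apply, smul_apply, sub_apply, comp_prod_apply_eq, smul_eq_mul, nsmul_eq_mul,
    zero_apply, Pi.mul_apply, Nat.cast_ofNat, Nat.add_one_sub_one, pow_one, mul_zero, sub_zero]
  linear_combination (norm := (field_simp; ring)) θ y * fderiv ℝ v y w * hGibbs1
    + θ y * fderiv ℝ θ y w * hGibbs2 - fderiv ℝ v y w * hGibbs3

end Thermodynamics

section HyperbolicNavierStokes

variable {τ1 τ2 κ μ : ℝ} {pt et st : ℝ × ℝ → ℝ} {v θ q S : ℝ × ℝ → ℝ}

theorem entropy_production {y : ℝ × ℝ} {u : ℝ × ℝ → ℝ}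
    (hv : DifferentiableAt ℝ v y) (hu : DifferentiableAt ℝ u y) (hθ : DifferentiableAt ℝ θ y)
    (hq : DifferentiableAt ℝ q y) (hS : DifferentiableAt ℝ S y)
    (hpt : DifferentiableAt ℝ pt (v y, θ y)) (het : DifferentiableAt ℝ et (v y, θ y))
    (hst : DifferentiableAt ℝ st (v y, θ y))
    (hGibbs1 : d1 st (v y, θ y) = d2 pt (v y, θ y))
    (hGibbs2 : d2 st (v y, θ y) = 1 / θ y * d2 et (v y, θ y))
    (hGibbs3 : d1 et (v y, θ y) = θ y * d2 pt (v y, θ y) - pt (v y, θ y))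
    (hv0 : v y ≠ 0) (hθ0 : θ y ≠ 0) (hκ : κ ≠ 0) (hμ : μ ≠ 0)
    (hmass : d1 v y - d2 u y = 0)
    (hmom : d1 u y + d2 (pressure τ1 τ2 κ μ pt v θ q S) y = d2 S y)
    (henergy : d1 (fun x => internalEnergy τ1 τ2 κ μ et v θ q S x + u x ^ 2 / 2) y
        + d2 (fun x => u x * pressure τ1 τ2 κ μ pt v θ q S x) y + d2 q y
      = d2 (fun x => u x * S x) y)
    (hcattaneo : τ1 * d1 q y + q y + κ * d2 θ y / v y = 0)
    (hmaxwell : τ2 * d1 S y + S y = μ * d2 u y / v y) :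
    d1 (entropy τ1 κ st v θ q) y + d2 (fun x => q x / θ x) y
      = v y * q y ^ 2 / (κ * θ y ^ 2) + v y * S y ^ 2 / (μ * θ y) := by
  have hp : DifferentiableAt ℝ (pressure τ1 τ2 κ μ pt v θ q S) y := by
    unfold pressure; fun_prop (disch := simp [hκ, hθ0])
  have he : DifferentiableAt ℝ (internalEnergy τ1 τ2 κ μ et v θ q S) y := by
    unfold internalEnergy; fun_prop (disch := simp [hκ, hθ0])
  have hE := internal_energy_balance he hp hu hS henergy hmom
  have hG : θ y * d1 (entropy τ1 κ st v θ q) y = d1 (internalEnergy τ1 τ2 κ μ et v θ q S) y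
      + pressure τ1 τ2 κ μ pt v θ q S y * d1 v y - _ * d1 q y - _ * d1 S y :=
    gibbs_relation_fderiv hv hθ hq hS het hst hGibbs1 hGibbs2 hGibbs3 hθ0 hκ hμ (1, 0)
  have hflux : d2 (fun x => q x / θ x) y = (θ y * d2 q y - q y * d2 θ y) / θ y ^ 2 :=
    fderiv_fun_div_apply hq hθ hθ0 (0, 1)
  linear_combination (norm := (field_simp; ring)) (1 / θ y) * hG + hflux + (1 / θ y) * hE
    + (pressure τ1 τ2 κ μ pt v θ q S y / θ y) * hmass
    - (v y * q y / (κ * θ y ^ 2)) * hcattaneo - (v y * S y / (μ * θ y)) * hmaxwell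

end HyperbolicNavierStokes

theorem entropy_equation_hyperbolic_NS_general
    (τ1 τ2 κ μ : ℝ) (hκ : 0 < κ) (hμ : 0 < μ)
    (pt et st : ℝ × ℝ → ℝ)
    (hpt : ContDiffOn ℝ 1 pt {y : ℝ × ℝ | 0 < y.1 ∧ 0 < y.2})
    (het : ContDiffOn ℝ 1 et {y : ℝ × ℝ | 0 < y.1 ∧ 0 < y.2})
    (hst : ContDiffOn ℝ 1 st {y : ℝ × ℝ | 0 < y.1 ∧ 0 < y.2})
    (hGibbs1 : ∀ y : ℝ × ℝ, 0 < y.1 → 0 < y.2 → d1 st y = d2 pt y)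
    (hGibbs2 : ∀ y : ℝ × ℝ, 0 < y.1 → 0 < y.2 → d2 st y = (1 / y.2) * d2 et y)
    (hGibbs3 : ∀ y : ℝ × ℝ, 0 < y.1 → 0 < y.2 → d1 et y = y.2 * d2 pt y - pt y)
    (U : Set (ℝ × ℝ)) (hU : IsOpen U)
    (v u θ q S : ℝ × ℝ → ℝ)
    (hv : ContDiffOn ℝ 1 v U) (hu : ContDiffOn ℝ 1 u U)
    (hθ : ContDiffOn ℝ 1 θ U) (hq : ContDiffOn ℝ 1 q U) (hS : ContDiffOn ℝ 1 S U)
    (hvpos : ∀ y ∈ U, 0 < v y) (hθpos : ∀ y ∈ U, 0 < θ y)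
    (hmass : ∀ y ∈ U, d1 v y - d2 u y = 0)
    (hmom : ∀ y ∈ U,
      d1 u y
        + d2 (fun y' => pt (v y', θ y') - τ1 * (q y') ^ 2 / (2 * κ * θ y')
            - τ2 * (S y') ^ 2 / (2 * μ)) y
      = d2 S y)
    (henergy : ∀ y ∈ U,
      d1 (fun y' => (et (v y', θ y') + τ1 * v y' * (q y') ^ 2 / (κ * θ y')
            + τ2 * v y' * (S y') ^ 2 / (2 * μ)) + (u y') ^ 2 / 2) y
        + d2 (fun y' => u y' * (pt (v y', θ y') - τ1 * (q y') ^ 2 / (2 * κ * θ y')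
            - τ2 * (S y') ^ 2 / (2 * μ))) y
        + d2 q y
      = d2 (fun y' => u y' * S y') y)
    (hcattaneo : ∀ y ∈ U, τ1 * d1 q y + q y + κ * d2 θ y / v y = 0)
    (hmaxwell : ∀ y ∈ U, τ2 * d1 S y + S y = μ * d2 u y / v y) :
    ∀ y ∈ U,
      d1 (fun y' => st (v y', θ y') + τ1 * v y' * (q y') ^ 2 / (2 * κ * (θ y') ^ 2)) y
        + d2 (fun y' => q y' / θ y') y
      = v y * (q y) ^ 2 / (κ * (θ y) ^ 2) + v y * (S y) ^ 2 / (μ * θ y) := by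
  intro y hy
  have hUy := hU.mem_nhds hy
  have hvy := hvpos y hy
  have hθy := hθpos y hy
  have hquadrant : {z : ℝ × ℝ | 0 < z.1 ∧ 0 < z.2} ∈ nhds (v y, θ y) :=
    ((isOpen_lt continuous_const continuous_fst).inter
      (isOpen_lt continuous_const continuous_snd)).mem_nhds ⟨hvy, hθy⟩
  exact entropy_production (hv.differentiableOn_one.differentiableAt hUy)
    (hu.differentiableOn_one.differentiableAt hUy) (hθ.differentiableOn_one.differentiableAt hUy)
    (hq.differentiableOn_one.differentiableAt hUy) (hS.differentiableOn_one.differentiableAt hUy)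
    (hpt.differentiableOn_one.differentiableAt hquadrant)
    (het.differentiableOn_one.differentiableAt hquadrant)
    (hst.differentiableOn_one.differentiableAt hquadrant)
    (hGibbs1 _ hvy hθy) (hGibbs2 _ hvy hθy) (hGibbs3 _ hvy hθy) hvy.ne' hθy.ne' hκ.ne' hμ.ne'
    (hmass y hy) (hmom y hy) (henergy y hy) (hcattaneo y hy) (hmaxwell y hy)

/-- for C¹ solutions of the one-dimensional hyperbolic Navier–Stokes
system with Gibbs-compatible constitutive functions, the entropy
s = s̃(v,θ) + τ1 v q²/(2κθ²) satisfies
∂_t s + ∂_x(q/θ) = v q²/(κθ²) + v S²/(μθ). -/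
theorem entropy_equation_hyperbolic_NS
    (τ1 τ2 κ μ : ℝ) (hτ1 : 0 < τ1) (hτ2 : 0 < τ2) (hκ : 0 < κ) (hμ : 0 < μ)
    (pt et st : ℝ × ℝ → ℝ)
    (hpt : ContDiffOn ℝ 1 pt {y : ℝ × ℝ | 0 < y.1 ∧ 0 < y.2})
    (het : ContDiffOn ℝ 1 et {y : ℝ × ℝ | 0 < y.1 ∧ 0 < y.2})
    (hst : ContDiffOn ℝ 1 st {y : ℝ × ℝ | 0 < y.1 ∧ 0 < y.2})
    (hGibbs1 : ∀ y : ℝ × ℝ, 0 < y.1 → 0 < y.2 → d1 st y = d2 pt y)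
    (hGibbs2 : ∀ y : ℝ × ℝ, 0 < y.1 → 0 < y.2 → d2 st y = (1 / y.2) * d2 et y)
    (hGibbs3 : ∀ y : ℝ × ℝ, 0 < y.1 → 0 < y.2 → d1 et y = y.2 * d2 pt y - pt y)
    (U : Set (ℝ × ℝ)) (hU : IsOpen U)
    (v u θ q S : ℝ × ℝ → ℝ)
    (hv : ContDiffOn ℝ 1 v U) (hu : ContDiffOn ℝ 1 u U)
    (hθ : ContDiffOn ℝ 1 θ U) (hq : ContDiffOn ℝ 1 q U) (hS : ContDiffOn ℝ 1 S U)
    (hvpos : ∀ y ∈ U, 0 < v y) (hθpos : ∀ y ∈ U, 0 < θ y)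
    (heθpos : ∀ y ∈ U,
      0 < d2 et (v y, θ y) - τ1 * v y * (q y) ^ 2 / (κ * (θ y) ^ 2))
    (hmass : ∀ y ∈ U, d1 v y - d2 u y = 0)
    (hmom : ∀ y ∈ U,
      d1 u y
        + d2 (fun y' => pt (v y', θ y') - τ1 * (q y') ^ 2 / (2 * κ * θ y')
            - τ2 * (S y') ^ 2 / (2 * μ)) y
      = d2 S y)
    (henergy : ∀ y ∈ U,
      d1 (fun y' => (et (v y', θ y') + τ1 * v y' * (q y') ^ 2 / (κ * θ y')
            + τ2 * v y' * (S y') ^ 2 / (2 * μ)) + (u y') ^ 2 / 2) y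
        + d2 (fun y' => u y' * (pt (v y', θ y') - τ1 * (q y') ^ 2 / (2 * κ * θ y')
            - τ2 * (S y') ^ 2 / (2 * μ))) y
        + d2 q y
      = d2 (fun y' => u y' * S y') y)
    (hcattaneo : ∀ y ∈ U, τ1 * d1 q y + q y + κ * d2 θ y / v y = 0)
    (hmaxwell : ∀ y ∈ U, τ2 * d1 S y + S y = μ * d2 u y / v y) :
    ∀ y ∈ U,
      d1 (fun y' => st (v y', θ y') + τ1 * v y' * (q y') ^ 2 / (2 * κ * (θ y') ^ 2)) y
        + d2 (fun y' => q y' / θ y') y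
      = v y * (q y) ^ 2 / (κ * (θ y) ^ 2) + v y * (S y) ^ 2 / (μ * θ y) :=
  entropy_equation_hyperbolic_NS_general τ1 τ2 κ μ hκ hμ pt et st hpt het hst hGibbs1 hGibbs2
    hGibbs3 U hU v u θ q S hv hu hθ hq hS hvpos hθpos hmass hmom henergy hcattaneo hmaxwell
end

section
/- Let τ1, τ2, κ, μ > 0 and let p̃, ẽ, s̃ : (0,∞)×(0,∞) → ℝ be C¹ functions satisfying ∂_v s̃(v,θ) = ∂_θ p̃(v,θ), ∂_θ s̃(v,θ) = (1/θ)∂_θ ẽ(v,θ), and ∂_v ẽ(v,θ) = θ ∂_θ p̃(v,θ) − p̃(v,θ) for all v, θ > 0. Suppose (v,u,θ,q,S) are C¹ real-valued functions of (t,x) on an open subset U of ℝ², with v > 0 and θ > 0 and ∂_θ ẽ(v,θ) − τ1 v q²/(κθ²) > 0 pointwise on U, which satisfy on U the hyperbolic Navier–Stokes system ∂_t v − ∂_x u = 0; ∂_t u + ∂_x p = ∂_x S; ∂_t(e + u²/2) + ∂_x(u p) + ∂_x q = ∂_x(u S); τ1 ∂_t q + q + κ ∂_x θ / v = 0; τ2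 ∂_t S + S = μ ∂_x u / v, where p = p̃(v,θ) − τ1 q²/(2κθ) − τ2 S²/(2μ) and e = ẽ(v,θ) + τ1 v q²/(κθ) + τ2 v S²/(2μ). Then, with s := s̃(v,θ) + τ1 v q²/(2κθ²), the relative entropy η := (e + u²/2) − (s − p̃(1,1)(v−1)) − ẽ(1,1) satisfies, pointwise on U, the dissipation identity ∂_t η + ∂_x( u(p − p̃(1,1)) + (1 − 1/θ) q − u S ) + v q²/(κθ²) + v S²/(μθ) = 0. -/
/-!
Multiply the five balance laws by `p̃(1,1) − p/θ`, `u/θ`, `1 − 1/θ`, `v q/(κθ²)` and `v S/(μθ)`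
(mass, momentum, energy, Cattaneo, Maxwell) and add them. By the chain rule and the Gibbs relation
`θ ds̃ = dẽ + p̃ dv`, which is what the three compatibility conditions on `p̃, ẽ, s̃` amount to,
the sum is exactly the dissipation identity.
-/

open ContinuousLinearMap

theorem fderiv_fun_div {𝕜 E : Type*} [NontriviallyNormedField 𝕜] [NormedAddCommGroup E]
    [NormedSpace 𝕜 E] {a b : E → 𝕜} {y : E} (ha : DifferentiableAt 𝕜 a y)
    (hb : DifferentiableAt 𝕜 b y) (hy : b y ≠ 0) :
    fderiv 𝕜 (fun x => a x / b x) y = (b y ^ 2)⁻¹ • (b y • fderiv 𝕜 a y - a y • fderiv 𝕜 b y) := by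
  have h := ha.hasFDerivAt.mul ((hasDerivAt_inv hy).comp_hasFDerivAt y hb.hasFDerivAt)
  rw [show (fun x => a x / b x) = a * (fun y => y⁻¹) ∘ b by ext; simp [div_eq_mul_inv], h.fderiv]
  ext w
  simp only [Function.comp_apply, add_apply, sub_apply, smul_apply, smul_eq_mul, neg_mul, mul_neg]
  field_simp
  ring

theorem ContinuousLinearMap.apply_prodMk_eq_add (L : ℝ × ℝ →L[ℝ] ℝ) (a b : ℝ) :
    L (a, b) = a * L (1, 0) + b * L (0, 1) := by
  rw [show ((a, b) : ℝ × ℝ) = a • (1, 0) + b • (0, 1) by simp, map_add, map_smul, map_smul,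
    smul_eq_mul, smul_eq_mul]

theorem fderiv_comp_prodMk_eq {E : Type*} [NormedAddCommGroup E] [NormedSpace ℝ E]
    {F : ℝ × ℝ → ℝ} {f g : E → ℝ} {y : E} (hF : DifferentiableAt ℝ F (f y, g y))
    (hf : DifferentiableAt ℝ f y) (hg : DifferentiableAt ℝ g y) :
    fderiv ℝ (fun x => F (f x, g x)) y =
      d1 F (f y, g y) • fderiv ℝ f y + d2 F (f y, g y) • fderiv ℝ g y := by
  rw [show (fun x => F (f x, g x)) = F ∘ fun x => (f x, g x) from rfl,
    fderiv_comp y hF (hf.prodMk hg), hf.fderiv_prodMk hg]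
  ext w
  simp only [comp_apply, prod_apply, add_apply, smul_apply, smul_eq_mul, d1, d2]
  rw [apply_prodMk_eq_add]
  ring

theorem gibbs_relation {p e s : ℝ × ℝ → ℝ} {z : ℝ × ℝ} (h1 : d1 s z = d2 p z)
    (h2 : d2 s z = 1 / z.2 * d2 e z) (h3 : d1 e z = z.2 * d2 p z - p z) (hz : z.2 ≠ 0) (a b : ℝ) :
    z.2 * (d1 s z * a + d2 s z * b) = d1 e z * a + d2 e z * b + p z * a := by
  rw [h1, h2, h3]
  field_simp
  ring

theorem relative_entropy_dissipation_hyperbolic_NS_general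
    (τ1 τ2 κ μ : ℝ) (hκ : 0 < κ) (hμ : 0 < μ)
    (pt et st : ℝ × ℝ → ℝ)
    (hpt : ContDiffOn ℝ 1 pt {y : ℝ × ℝ | 0 < y.1 ∧ 0 < y.2})
    (het : ContDiffOn ℝ 1 et {y : ℝ × ℝ | 0 < y.1 ∧ 0 < y.2})
    (hst : ContDiffOn ℝ 1 st {y : ℝ × ℝ | 0 < y.1 ∧ 0 < y.2})
    (hGibbs1 : ∀ y : ℝ × ℝ, 0 < y.1 → 0 < y.2 → d1 st y = d2 pt y)
    (hGibbs2 : ∀ y : ℝ × ℝ, 0 < y.1 → 0 < y.2 → d2 st y = (1 / y.2) * d2 et y)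
    (hGibbs3 : ∀ y : ℝ × ℝ, 0 < y.1 → 0 < y.2 → d1 et y = y.2 * d2 pt y - pt y)
    (U : Set (ℝ × ℝ)) (hU : IsOpen U)
    (v u θ q S : ℝ × ℝ → ℝ)
    (hv : ContDiffOn ℝ 1 v U) (hu : ContDiffOn ℝ 1 u U)
    (hθ : ContDiffOn ℝ 1 θ U) (hq : ContDiffOn ℝ 1 q U) (hS : ContDiffOn ℝ 1 S U)
    (hvpos : ∀ y ∈ U, 0 < v y) (hθpos : ∀ y ∈ U, 0 < θ y)
    (hmass : ∀ y ∈ U, d1 v y - d2 u y = 0)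
    (hmom : ∀ y ∈ U,
      d1 u y
        + d2 (fun y' => pt (v y', θ y') - τ1 * (q y') ^ 2 / (2 * κ * θ y')
            - τ2 * (S y') ^ 2 / (2 * μ)) y
      = d2 S y)
    (henergy : ∀ y ∈ U,
      d1 (fun y' => (et (v y', θ y') + τ1 * v y' * (q y') ^ 2 / (κ * θ y')
            + τ2 * v y' * (S y') ^ 2 / (2 * μ)) + (u y') ^ 2 / 2) y
        + d2 (fun y' => u y' * (pt (v y', θ y') - τ1 * (q y') ^ 2 / (2 * κ * θ y')
            - τ2 * (S y') ^ 2 / (2 * μ))) y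
        + d2 q y
      = d2 (fun y' => u y' * S y') y)
    (hcattaneo : ∀ y ∈ U, τ1 * d1 q y + q y + κ * d2 θ y / v y = 0)
    (hmaxwell : ∀ y ∈ U, τ2 * d1 S y + S y = μ * d2 u y / v y) :
    ∀ y ∈ U,
      d1 (fun y' =>
          ((et (v y', θ y') + τ1 * v y' * (q y') ^ 2 / (κ * θ y')
              + τ2 * v y' * (S y') ^ 2 / (2 * μ)) + (u y') ^ 2 / 2)
            - ((st (v y', θ y') + τ1 * v y' * (q y') ^ 2 / (2 * κ * (θ y') ^ 2))
                - pt (1, 1) * (v y' - 1))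
            - et (1, 1)) y
        + d2 (fun y' =>
            u y' * ((pt (v y', θ y') - τ1 * (q y') ^ 2 / (2 * κ * θ y')
                - τ2 * (S y') ^ 2 / (2 * μ)) - pt (1, 1))
              + (1 - 1 / θ y') * q y' - u y' * S y') y
        + v y * (q y) ^ 2 / (κ * (θ y) ^ 2) + v y * (S y) ^ 2 / (μ * θ y) = 0 := by
  intro y hy
  obtain ⟨hvy, hθy⟩ : 0 < v y ∧ 0 < θ y := ⟨hvpos y hy, hθpos y hy⟩
  have diff : ∀ f : ℝ × ℝ → ℝ, ContDiffOn ℝ 1 f U → DifferentiableAt ℝ f y := fun f hf =>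
    (hf.contDiffAt (hU.mem_nhds hy)).differentiableAt one_ne_zero
  have diffΩ : ∀ F : ℝ × ℝ → ℝ, ContDiffOn ℝ 1 F {z : ℝ × ℝ | 0 < z.1 ∧ 0 < z.2} →
      DifferentiableAt ℝ F (v y, θ y) := fun F hF =>
    (hF.contDiffAt ((isOpen_Ioi.prod isOpen_Ioi).mem_nhds
      (show (v y, θ y) ∈ Set.Ioi 0 ×ˢ Set.Ioi 0 from ⟨hvy, hθy⟩))).differentiableAt one_ne_zero
  have hvd := diff v hv; have hud := diff u hu; have hθd := diff θ hθ
  have hqd := diff q hq; have hSd := diff S hS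
  have hptd := diffΩ pt hpt; have hetd := diffΩ et het; have hstd := diffΩ st hst
  have gibbs := gibbs_relation (hGibbs1 (v y, θ y) hvy hθy) (hGibbs2 (v y, θ y) hvy hθy)
    (hGibbs3 (v y, θ y) hvy hθy) hθy.ne' (fderiv ℝ v y (1, 0)) (fderiv ℝ θ y (1, 0))
  specialize hmass y hy; specialize hmom y hy; specialize henergy y hy
  specialize hcattaneo y hy; specialize hmaxwell y hy
  simp only [d1, d2] at hmass hmom henergy hcattaneo hmaxwell ⊢
  simp (disch := first
      | fun_prop (disch := simp [hθy.ne', hκ.ne', hμ.ne'])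
      | simp [hθy.ne', hκ.ne', hμ.ne']) only
    [fderiv_fun_add, fderiv_fun_sub, fderiv_fun_mul, fderiv_fun_pow, fderiv_fun_div,
      fderiv_comp_prodMk_eq, fderiv_const_apply] at hmom henergy ⊢
  simp only [add_apply, sub_apply, smul_apply, smul_eq_mul, zero_apply] at hmom henergy ⊢
  linear_combination (norm := (field_simp; ring))
    (pt (1, 1) - (pt (v y, θ y) - τ1 * q y ^ 2 / (2 * κ * θ y) - τ2 * S y ^ 2 / (2 * μ)) / θ y) * hmass
    + (u y / θ y) * hmom + (1 - 1 / θ y) * henergy + (v y * q y / (κ * θ y ^ 2)) * hcattaneo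
    + (v y * S y / (μ * θ y)) * hmaxwell - (1 / θ y) * gibbs

/-- for C¹ solutions of the one-dimensional hyperbolic Navier–Stokes
system with Gibbs-compatible constitutive functions, the relative entropy
η = (e + u²/2) − (s − p̃(1,1)(v−1)) − ẽ(1,1) satisfies the dissipation identity
∂_t η + ∂_x( u(p − p̃(1,1)) + (1 − 1/θ) q − u S ) + v q²/(κθ²) + v S²/(μθ) = 0. -/
theorem relative_entropy_dissipation_hyperbolic_NS
    (τ1 τ2 κ μ : ℝ) (hτ1 : 0 < τ1) (hτ2 : 0 < τ2) (hκ : 0 < κ) (hμ : 0 < μ)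
    (pt et st : ℝ × ℝ → ℝ)
    (hpt : ContDiffOn ℝ 1 pt {y : ℝ × ℝ | 0 < y.1 ∧ 0 < y.2})
    (het : ContDiffOn ℝ 1 et {y : ℝ × ℝ | 0 < y.1 ∧ 0 < y.2})
    (hst : ContDiffOn ℝ 1 st {y : ℝ × ℝ | 0 < y.1 ∧ 0 < y.2})
    (hGibbs1 : ∀ y : ℝ × ℝ, 0 < y.1 → 0 < y.2 → d1 st y = d2 pt y)
    (hGibbs2 : ∀ y : ℝ × ℝ, 0 < y.1 → 0 < y.2 → d2 st y = (1 / y.2) * d2 et y)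
    (hGibbs3 : ∀ y : ℝ × ℝ, 0 < y.1 → 0 < y.2 → d1 et y = y.2 * d2 pt y - pt y)
    (U : Set (ℝ × ℝ)) (hU : IsOpen U)
    (v u θ q S : ℝ × ℝ → ℝ)
    (hv : ContDiffOn ℝ 1 v U) (hu : ContDiffOn ℝ 1 u U)
    (hθ : ContDiffOn ℝ 1 θ U) (hq : ContDiffOn ℝ 1 q U) (hS : ContDiffOn ℝ 1 S U)
    (hvpos : ∀ y ∈ U, 0 < v y) (hθpos : ∀ y ∈ U, 0 < θ y)
    (heθpos : ∀ y ∈ U,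
      0 < d2 et (v y, θ y) - τ1 * v y * (q y) ^ 2 / (κ * (θ y) ^ 2))
    (hmass : ∀ y ∈ U, d1 v y - d2 u y = 0)
    (hmom : ∀ y ∈ U,
      d1 u y
        + d2 (fun y' => pt (v y', θ y') - τ1 * (q y') ^ 2 / (2 * κ * θ y')
            - τ2 * (S y') ^ 2 / (2 * μ)) y
      = d2 S y)
    (henergy : ∀ y ∈ U,
      d1 (fun y' => (et (v y', θ y') + τ1 * v y' * (q y') ^ 2 / (κ * θ y')
            + τ2 * v y' * (S y') ^ 2 / (2 * μ)) + (u y') ^ 2 / 2) y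
        + d2 (fun y' => u y' * (pt (v y', θ y') - τ1 * (q y') ^ 2 / (2 * κ * θ y')
            - τ2 * (S y') ^ 2 / (2 * μ))) y
        + d2 q y
      = d2 (fun y' => u y' * S y') y)
    (hcattaneo : ∀ y ∈ U, τ1 * d1 q y + q y + κ * d2 θ y / v y = 0)
    (hmaxwell : ∀ y ∈ U, τ2 * d1 S y + S y = μ * d2 u y / v y) :
    ∀ y ∈ U,
      d1 (fun y' =>
          ((et (v y', θ y') + τ1 * v y' * (q y') ^ 2 / (κ * θ y')
              + τ2 * v y' * (S y') ^ 2 / (2 * μ)) + (u y') ^ 2 / 2)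
            - ((st (v y', θ y') + τ1 * v y' * (q y') ^ 2 / (2 * κ * (θ y') ^ 2))
                - pt (1, 1) * (v y' - 1))
            - et (1, 1)) y
        + d2 (fun y' =>
            u y' * ((pt (v y', θ y') - τ1 * (q y') ^ 2 / (2 * κ * θ y')
                - τ2 * (S y') ^ 2 / (2 * μ)) - pt (1, 1))
              + (1 - 1 / θ y') * q y' - u y' * S y') y
        + v y * (q y) ^ 2 / (κ * (θ y) ^ 2) + v y * (S y) ^ 2 / (μ * θ y) = 0 :=
  relative_entropy_dissipation_hyperbolic_NS_general τ1 τ2 κ μ hκ hμ pt et st hpt het hst hGibbs1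
    hGibbs2 hGibbs3 U hU v u θ q S hv hu hθ hq hS hvpos hθpos hmass hmom henergy hcattaneo hmaxwell
end

section
/- Let R, C_v, τ1, τ2, κ, μ > 0 and define on (0,∞)×(0,∞)×ℝ×ℝ the ideal polytropic constitutive functions p(v,θ,q,S) = Rθ/v − τ1 q²/(2κθ) − τ2 S²/(2μ) and e(v,θ,q,S) = C_v θ + τ1 v q²/(κθ) + τ2 v S²/(2μ). Then for all v > 0, θ > 0, q ∈ ℝ, S ∈ ℝ the Gibbs compatibility relation ∂_v e(v,θ,q,S) = θ ∂_θ p(v,θ,q,S) − p(v,θ,q,S) holds. -/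
/-!
The internal energy is affine in `v`, so `∂_v e = τ1 q²/(κθ) + τ2 S²/(2μ)`. On the other side,
the term `Rθ/v` of `p` is linear in `θ` and drops out of `θ ∂_θ p − p`, while the term
`−τ1 q²/(2κθ)`, homogeneous of degree `−1` in `θ`, contributes twice its negative and the
constant `−τ2 S²/(2μ)` contributes its negative.
-/

theorem hasDerivAt_polytropic_energy_volume (Cv τ1 τ2 κ μ θ q S v : ℝ) :
    HasDerivAt (fun v' => Cv * θ + τ1 * v' * q ^ 2 / (κ * θ) + τ2 * v' * S ^ 2 / (2 * μ))
      (τ1 * q ^ 2 / (κ * θ) + τ2 * S ^ 2 / (2 * μ)) v := by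
  have affine : (fun v' => Cv * θ + τ1 * v' * q ^ 2 / (κ * θ) + τ2 * v' * S ^ 2 / (2 * μ))
      = fun v' => Cv * θ + v' * (τ1 * q ^ 2 / (κ * θ) + τ2 * S ^ 2 / (2 * μ)) := by
    funext v'; ring
  rw [affine]
  simpa using ((hasDerivAt_id v).mul_const _).const_add (Cv * θ)

theorem hasDerivAt_polytropic_pressure_temperature (R τ1 τ2 κ μ q S v : ℝ) {θ : ℝ}
    (hθ : θ ≠ 0) :
    HasDerivAt (fun θ' => R * θ' / v - τ1 * q ^ 2 / (2 * κ * θ') - τ2 * S ^ 2 / (2 * μ))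
      (R / v + τ1 * q ^ 2 / (2 * κ * θ ^ 2)) θ := by
  have split : (fun θ' => R * θ' / v - τ1 * q ^ 2 / (2 * κ * θ') - τ2 * S ^ 2 / (2 * μ))
      = fun θ' => θ' * (R / v) - τ1 * q ^ 2 / (2 * κ) * θ'⁻¹ - τ2 * S ^ 2 / (2 * μ) := by
    funext θ'; ring
  rw [split]
  refine ((((hasDerivAt_id θ).mul_const (R / v)).sub
    ((hasDerivAt_inv hθ).const_mul _)).sub_const _).congr_deriv ?_
  ring

theorem gibbs_compatibility_ideal_polytropic_general
    (R Cv τ1 τ2 κ μ : ℝ)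
    (v θ q S : ℝ) (hθ : 0 < θ) :
    deriv (fun v' => Cv * θ + τ1 * v' * q ^ 2 / (κ * θ) + τ2 * v' * S ^ 2 / (2 * μ)) v
      = θ * deriv (fun θ' => R * θ' / v - τ1 * q ^ 2 / (2 * κ * θ') - τ2 * S ^ 2 / (2 * μ)) θ
        - (R * θ / v - τ1 * q ^ 2 / (2 * κ * θ) - τ2 * S ^ 2 / (2 * μ)) := by
  rw [(hasDerivAt_polytropic_energy_volume Cv τ1 τ2 κ μ θ q S v).deriv,
    (hasDerivAt_polytropic_pressure_temperature R τ1 τ2 κ μ q S v hθ.ne').deriv]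
  field_simp
  ring

/-- Gibbs compatibility relation ∂_v e = θ ∂_θ p − p for the ideal
polytropic constitutive functions of the hyperbolic Navier–Stokes model. -/
theorem gibbs_compatibility_ideal_polytropic
    (R Cv τ1 τ2 κ μ : ℝ)
    (hR : 0 < R) (hCv : 0 < Cv) (hτ1 : 0 < τ1) (hτ2 : 0 < τ2) (hκ : 0 < κ) (hμ : 0 < μ)
    (v θ q S : ℝ) (hv : 0 < v) (hθ : 0 < θ) :
    deriv (fun v' => Cv * θ + τ1 * v' * q ^ 2 / (κ * θ) + τ2 * v' * S ^ 2 / (2 * μ)) v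
      = θ * deriv (fun θ' => R * θ' / v - τ1 * q ^ 2 / (2 * κ * θ') - τ2 * S ^ 2 / (2 * μ)) θ
        - (R * θ / v - τ1 * q ^ 2 / (2 * κ * θ) - τ2 * S ^ 2 / (2 * μ)) :=
  gibbs_compatibility_ideal_polytropic_general R Cv τ1 τ2 κ μ v θ q S hθ
end

section
/- Let R > 0, γ > 1, w > 0, z > 0, and let A* be the 5×5 real matrix with rows (0, −1, 0, 0, 0), (−R, 0, R, 0, −1), (0, γ−1, 0, (γ−1)/R, 0), (0, 0, R²w/(γ−1), 0, 0), (0, −Rz, 0, 0, 0). Let L = ((z+w+γ) − √((z+w+γ)² − 4(z+1)w))/2 (the smaller root of x² − (z+w+γ)x + (z+1)w = 0; the square root is well defined since (z+w+γ)² − 4(z+1)w = (z−w+γ)² + 4w(γ−1) > 0), and let λ ∈ ℝ satisfy λ² = L·R. Then the vector r* = ( R(w−L), −λR(w−L), (γ−1)RL, R²wλ, R²z(w−L) ) is nonzero and satisfies A* r* = λ r*; that is, r* is an eigenvector of A* with eigenvalue λ. -/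
/-- the vector r* is a (nonzero) eigenvector of the linearized
hyperbolic Navier–Stokes matrix A* with eigenvalue λ, where λ² = L·R and L is the
smaller root of x² − (z+w+γ)x + (z+1)w = 0. -/
theorem eigenvector_at_equilibrium (R γ w z L lam : ℝ)
    (hR : 0 < R) (hγ : 1 < γ) (hw : 0 < w) (hz : 0 < z)
    (hL : L = ((z + w + γ) - Real.sqrt ((z + w + γ) ^ 2 - 4 * (z + 1) * w)) / 2)
    (hlam : lam ^ 2 = L * R) :
    (![R * (w - L), -(lam * (R * (w - L))), (γ - 1) * R * L, R ^ 2 * w * lam,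
        R ^ 2 * z * (w - L)] : Fin 5 → ℝ) ≠ 0
    ∧ (!![0, -1, 0, 0, 0;
          -R, 0, R, 0, -1;
          0, γ - 1, 0, (γ - 1) / R, 0;
          0, 0, R ^ 2 * w / (γ - 1), 0, 0;
          0, -R * z, 0, 0, 0] : Matrix (Fin 5) (Fin 5) ℝ).mulVec
        ![R * (w - L), -(lam * (R * (w - L))), (γ - 1) * R * L, R ^ 2 * w * lam,
          R ^ 2 * z * (w - L)]
      = lam • ![R * (w - L), -(lam * (R * (w - L))), (γ - 1) * R * L, R ^ 2 * w * lam,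
          R ^ 2 * z * (w - L)] := by
  have hD : (0:ℝ) ≤ (z + w + γ) ^ 2 - 4 * (z + 1) * w := by nlinarith [sq_nonneg (z - w + γ)]
  have hs2 : Real.sqrt ((z + w + γ) ^ 2 - 4 * (z + 1) * w) ^ 2
      = (z + w + γ) ^ 2 - 4 * (z + 1) * w := Real.sq_sqrt hD
  have hs0 : 0 ≤ Real.sqrt ((z + w + γ) ^ 2 - 4 * (z + 1) * w) := Real.sqrt_nonneg _
  -- quadratic identity
  have hquad : L ^ 2 - (z + w + γ) * L + (z + 1) * w = 0 := by
    subst hL; nlinarith [hs2]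
  -- L < w
  have hLw : L < w := by
    by_contra h
    push_neg at h
    have : Real.sqrt ((z + w + γ) ^ 2 - 4 * (z + 1) * w) ≤ z - w + γ := by
      subst hL; linarith
    nlinarith [hs2, hs0]
  have hγ1 : γ - 1 ≠ 0 := by linarith
  constructor
  · intro h
    have h0 := congrFun h 0
    simp at h0
    rcases h0 with h0 | h0
    · exact hR.ne' h0
    · linarith
  · funext i
    fin_cases i <;>
      simp [Matrix.mulVec, dotProduct, Fin.sum_univ_succ]
    · linear_combination R * (w - L) * hlam - R ^ 2 * hquad
    · field_simp
      ring
    · have h3 : R ^ 2 * w / (γ - 1) * ((γ - 1) * R * L) = R ^ 3 * w * L := by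
        field_simp
      rw [h3]
      linear_combination (-(R ^ 2 * w)) * hlam
    · ring
end

section
/- Let R > 0, γ > 1, w > 0, z > 0, let L ∈ ℝ satisfy L² = (z+w+γ)L − (z+1)w, and let λ ∈ ℝ satisfy λ² = L·R. Define the vectors G = ( R²[(z+w+2γ)L − (2z+3)w], 0, R²(w − γL), (γ−1)(2L − 2z − 1)λ, R(w − L) ) and r* = ( R(w−L), −λR(w−L), (γ−1)RL, R²wλ, R²z(w−L) ). Then the dot product satisfies G · r* = R³ ( M(w,z)·L − w·N(w,z) ), where M(w,z) = 2(γ−1)w² + (γ²−2γ+3)w − γ(γ+1)(z+γ) and N(w,z) = 2((γ−1)z+γ)w − γ(γ+1)(z+1). -/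
open Matrix

/-- the dot product of the gradient G of the characteristic function with
the right eigenvector r* equals R³(M(w,z)·L − w·N(w,z)). -/
theorem gradient_dot_eigenvector (R γ w z L lam : ℝ)
    (hR : 0 < R) (hγ : 1 < γ) (hw : 0 < w) (hz : 0 < z)
    (hL : L ^ 2 = (z + w + γ) * L - (z + 1) * w)
    (hlam : lam ^ 2 = L * R) :
    (![R ^ 2 * ((z + w + 2 * γ) * L - (2 * z + 3) * w), 0, R ^ 2 * (w - γ * L),
        (γ - 1) * (2 * L - 2 * z - 1) * lam, R * (w - L)] : Fin 5 → ℝ)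
      ⬝ᵥ
    (![R * (w - L), -(lam * (R * (w - L))), (γ - 1) * R * L, R ^ 2 * w * lam,
        R ^ 2 * z * (w - L)] : Fin 5 → ℝ)
      = R ^ 3 * ((2 * (γ - 1) * w ^ 2 + (γ ^ 2 - 2 * γ + 3) * w - γ * (γ + 1) * (z + γ)) * L
          - w * (2 * ((γ - 1) * z + γ) * w - γ * (γ + 1) * (z + 1))) := by
  simp only [dotProduct, Fin.sum_univ_five, Matrix.cons_val_zero, Matrix.cons_val_one,
    Matrix.head_cons, Matrix.cons_val_two, Matrix.tail_cons, Matrix.cons_val_three,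
    Matrix.cons_val_four]
  linear_combination (R^2*w + 2*R^2*w*z - R^2*γ*w - 2*R^2*γ*w*z - 2*L*R^2*w + 2*L*R^2*γ*w) * hlam
    + (-3*R^3*w - R^3*γ + 2*R^3*γ*w - R^3*γ^2) * hL
end

section
/- Fix an adiabatic index γ with 1 < γ ≤ 5/3 and let z > 0. Define M(w,z) = 2(γ−1)w² + (γ²−2γ+3)w − γ(γ+1)(z+γ) and N(w,z) = 2((γ−1)z+γ)w − γ(γ+1)(z+1). If w > 0 satisfies N(w,z) = 0 and w' > 0 satisfies M(w',z) = 0, then 0 < w < w'; that is, the unique positive zero w_N(z) of N(·,z) is strictly smaller than the unique positive zero w_M(z) of M(·,z). -/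
/-- the positive zero of N(·,z) is strictly smaller than the positive
zero of M(·,z). -/
theorem zero_of_N_lt_zero_of_M (γ z : ℝ) (hγ1 : 1 < γ) (hγ2 : γ ≤ 5 / 3) (hz : 0 < z)
    (w w' : ℝ) (hw : 0 < w) (hw' : 0 < w')
    (hN : 2 * ((γ - 1) * z + γ) * w - γ * (γ + 1) * (z + 1) = 0)
    (hM : 2 * (γ - 1) * w' ^ 2 + (γ ^ 2 - 2 * γ + 3) * w' - γ * (γ + 1) * (z + γ) = 0) :
    w < w' := by
  have hA : 0 < (γ - 1) * z + γ := by nlinarith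
  have h2 : 2 * ((γ - 1) * z + γ) * w = γ * (γ + 1) * (z + 1) := by linarith
  have hsq : (2 * ((γ - 1) * z + γ) * w) ^ 2 = (γ * (γ + 1) * (z + 1)) ^ 2 := by rw [h2]
  have hP : (4 * ((γ - 1) * z + γ) ^ 2) *
      (2 * (γ - 1) * w ^ 2 + (γ ^ 2 - 2 * γ + 3) * w - γ * (γ + 1) * (z + γ)) =
      -(γ * (γ - 1) * (γ + 1) *
        (4 * (γ - 1) * z ^ 3 + 6 * (γ - 1) * z ^ 2 + 6 * (γ - 1) * z + 4 * γ)) := by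
    linear_combination 2 * (γ - 1) * hsq + 2 * ((γ - 1) * z + γ) * (γ ^ 2 - 2 * γ + 3) * h2
  have hQpos : 0 < γ * (γ - 1) * (γ + 1) *
      (4 * (γ - 1) * z ^ 3 + 6 * (γ - 1) * z ^ 2 + 6 * (γ - 1) * z + 4 * γ) := by
    have h1 : 0 < γ - 1 := by linarith
    have : 0 < 4 * (γ - 1) * z ^ 3 + 6 * (γ - 1) * z ^ 2 + 6 * (γ - 1) * z + 4 * γ := by
      positivity
    positivity
  have key : 2 * (γ - 1) * w ^ 2 + (γ ^ 2 - 2 * γ + 3) * w - γ * (γ + 1) * (z + γ) < 0 := by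
    nlinarith [mul_pos hA hA]
  clear hP hQpos hsq h2 hN hA
  by_contra h
  push_neg at h
  have hww : w' ^ 2 ≤ w ^ 2 := by nlinarith
  have h1 : 0 ≤ (γ - 1) * (w ^ 2 - w' ^ 2) := by
    apply mul_nonneg <;> linarith
  have h3 : 0 ≤ (γ ^ 2 - 2 * γ + 3) * (w - w') := by
    apply mul_nonneg
    · nlinarith [sq_nonneg (γ - 1)]
    · linarith
  linarith
end

section
/- Fix an adiabatic index γ with 1 < γ ≤ 5/3 and let z > 0. Then for every real w one has 12w² − (12(γ+1)z + 24)w + 6(γ²+1)z² + 3(3γ²+2γ+3)z + 3(γ²+3) > 0. Consequently the cubic P(w,z) = 4w³ − (6(γ+1)z+12)w² + (6(γ²+1)z² + 3(3γ²+2γ+3)z + 3(γ²+3))w − γ(γ+1)(2z³ + 3(γ+1)z² + 3(γ+1)z + 2γ), whose derivative in w is the displayed quadratic, is strictly increasing as a function of w on ℝ. -/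
/-! The derivative of the cubic in `w` is a quadratic with positive leading coefficient and
discriminant `-144 [(γ - 1)² z² + (γ - 1)(3γ + 1) z + (γ² - 1)]`, which is negative as soon as
`γ > 1` and `z > 0`; so the derivative never vanishes and the cubic is strictly increasing. -/

theorem quadratic_pos_of_discrim_neg {K : Type*} [Field K] [LinearOrder K] [IsStrictOrderedRing K]
    {a b c : K} (ha : 0 < a) (h : discrim a b c < 0) (x : K) :
    0 < a * (x * x) + b * x + c := by
  have hsq : 4 * a * (a * (x * x) + b * x + c) = (2 * a * x + b) ^ 2 - discrim a b c := by
    unfold discrim; ring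
  have : 0 < 4 * a * (a * (x * x) + b * x + c) := by
    rw [hsq]; nlinarith [sq_nonneg (2 * a * x + b)]
  exact pos_of_mul_pos_right this (by positivity)

theorem hasDerivAt_cubic (a b c d x : ℝ) :
    HasDerivAt (fun x => a * x ^ 3 + b * x ^ 2 + c * x + d) (3 * a * x ^ 2 + 2 * b * x + c) x := by
  refine ((((hasDerivAt_pow 3 x).const_mul a).add ((hasDerivAt_pow 2 x).const_mul b)).add
    ((hasDerivAt_id x).const_mul c)).add_const d |>.congr_deriv ?_
  norm_num
  ring

theorem strictMono_cubic_of_deriv_pos {a b c : ℝ} (d : ℝ)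
    (h : ∀ x, 0 < 3 * a * x ^ 2 + 2 * b * x + c) :
    StrictMono fun x => a * x ^ 3 + b * x ^ 2 + c * x + d :=
  strictMono_of_deriv_pos fun x => (hasDerivAt_cubic a b c d x).deriv ▸ h x

theorem P_deriv_pos_and_strictMono_general (γ z : ℝ) (hγ1 : 1 < γ) (hz : 0 < z) :
    (∀ w : ℝ, 0 < 12 * w ^ 2 - (12 * (γ + 1) * z + 24) * w
        + 6 * (γ ^ 2 + 1) * z ^ 2 + 3 * (3 * γ ^ 2 + 2 * γ + 3) * z + 3 * (γ ^ 2 + 3))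
    ∧ StrictMono (fun w : ℝ =>
        4 * w ^ 3 - (6 * (γ + 1) * z + 12) * w ^ 2
          + (6 * (γ ^ 2 + 1) * z ^ 2 + 3 * (3 * γ ^ 2 + 2 * γ + 3) * z + 3 * (γ ^ 2 + 3)) * w
          - γ * (γ + 1) * (2 * z ^ 3 + 3 * (γ + 1) * z ^ 2 + 3 * (γ + 1) * z + 2 * γ)) := by
  set C := 6 * (γ ^ 2 + 1) * z ^ 2 + 3 * (3 * γ ^ 2 + 2 * γ + 3) * z + 3 * (γ ^ 2 + 3)
  have hγ : 0 < γ - 1 := sub_pos.mpr hγ1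
  have hbracket : 0 < (γ - 1) ^ 2 * z ^ 2 + (γ - 1) * (3 * γ + 1) * z + (γ ^ 2 - 1) := by
    have : 0 < γ ^ 2 - 1 := by nlinarith
    have : 0 < (γ - 1) * (3 * γ + 1) * z := mul_pos (mul_pos hγ (by linarith)) hz
    positivity
  have hdisc : discrim 12 (-(12 * (γ + 1) * z + 24)) C < 0 := by
    have : discrim 12 (-(12 * (γ + 1) * z + 24)) C
        = -144 * ((γ - 1) ^ 2 * z ^ 2 + (γ - 1) * (3 * γ + 1) * z + (γ ^ 2 - 1)) := by
      unfold discrim C; ring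
    linarith
  have hq (w : ℝ) : 0 < 12 * w ^ 2 - (12 * (γ + 1) * z + 24) * w + C := by
    linarith [quadratic_pos_of_discrim_neg (by norm_num) hdisc w]
  refine ⟨fun w => by linarith [hq w], ?_⟩
  convert strictMono_cubic_of_deriv_pos
    (-(γ * (γ + 1) * (2 * z ^ 3 + 3 * (γ + 1) * z ^ 2 + 3 * (γ + 1) * z + 2 * γ)))
    (a := 4) (b := -(6 * (γ + 1) * z + 12)) (c := C) (fun w => by linarith [hq w]) using 2 with w
  ring

/-- positivity of ∂_w P and strict monotonicity of the cubic P(·,z). -/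
theorem P_deriv_pos_and_strictMono (γ z : ℝ) (hγ1 : 1 < γ) (hγ2 : γ ≤ 5 / 3) (hz : 0 < z) :
    (∀ w : ℝ, 0 < 12 * w ^ 2 - (12 * (γ + 1) * z + 24) * w
        + 6 * (γ ^ 2 + 1) * z ^ 2 + 3 * (3 * γ ^ 2 + 2 * γ + 3) * z + 3 * (γ ^ 2 + 3))
    ∧ StrictMono (fun w : ℝ =>
        4 * w ^ 3 - (6 * (γ + 1) * z + 12) * w ^ 2
          + (6 * (γ ^ 2 + 1) * z ^ 2 + 3 * (3 * γ ^ 2 + 2 * γ + 3) * z + 3 * (γ ^ 2 + 3)) * w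
          - γ * (γ + 1) * (2 * z ^ 3 + 3 * (γ + 1) * z ^ 2 + 3 * (γ + 1) * z + 2 * γ)) :=
  P_deriv_pos_and_strictMono_general γ z hγ1 hz
end

section
/- Fix an adiabatic index γ with 1 < γ ≤ 5/3 and let z > 0. Define P(w,z) = 4w³ − (6(γ+1)z+12)w² + (6(γ²+1)z² + 3(3γ²+2γ+3)z + 3(γ²+3))w − γ(γ+1)(2z³ + 3(γ+1)z² + 3(γ+1)z + 2γ). Then there exists a unique w_P(z) > 0 with P(w_P(z), z) = 0; moreover P(w,z) < 0 for 0 < w < w_P(z) and P(w,z) > 0 for w > w_P(z). -/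
/-- the cubic P(·,z) has a unique positive zero w_P(z), is negative
before it and positive after it. -/
theorem P_unique_positive_zero (γ z : ℝ) (hγ1 : 1 < γ) (hγ2 : γ ≤ 5 / 3) (hz : 0 < z) :
    ∃ wP : ℝ, 0 < wP ∧
      (4 * wP ^ 3 - (6 * (γ + 1) * z + 12) * wP ^ 2
        + (6 * (γ ^ 2 + 1) * z ^ 2 + 3 * (3 * γ ^ 2 + 2 * γ + 3) * z + 3 * (γ ^ 2 + 3)) * wP
        - γ * (γ + 1) * (2 * z ^ 3 + 3 * (γ + 1) * z ^ 2 + 3 * (γ + 1) * z + 2 * γ) = 0) ∧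
      (∀ w : ℝ, 0 < w →
        4 * w ^ 3 - (6 * (γ + 1) * z + 12) * w ^ 2
          + (6 * (γ ^ 2 + 1) * z ^ 2 + 3 * (3 * γ ^ 2 + 2 * γ + 3) * z + 3 * (γ ^ 2 + 3)) * w
          - γ * (γ + 1) * (2 * z ^ 3 + 3 * (γ + 1) * z ^ 2 + 3 * (γ + 1) * z + 2 * γ) = 0
        → w = wP) ∧
      (∀ w : ℝ, 0 < w → w < wP →
        4 * w ^ 3 - (6 * (γ + 1) * z + 12) * w ^ 2
          + (6 * (γ ^ 2 + 1) * z ^ 2 + 3 * (3 * γ ^ 2 + 2 * γ + 3) * z + 3 * (γ ^ 2 + 3)) * w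
          - γ * (γ + 1) * (2 * z ^ 3 + 3 * (γ + 1) * z ^ 2 + 3 * (γ + 1) * z + 2 * γ) < 0) ∧
      (∀ w : ℝ, wP < w →
        0 < 4 * w ^ 3 - (6 * (γ + 1) * z + 12) * w ^ 2
          + (6 * (γ ^ 2 + 1) * z ^ 2 + 3 * (3 * γ ^ 2 + 2 * γ + 3) * z + 3 * (γ ^ 2 + 3)) * w
          - γ * (γ + 1) * (2 * z ^ 3 + 3 * (γ + 1) * z ^ 2 + 3 * (γ + 1) * z + 2 * γ)) := by
  set B : ℝ := 6 * (γ + 1) * z + 12 with hB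
  set C : ℝ := 6 * (γ ^ 2 + 1) * z ^ 2 + 3 * (3 * γ ^ 2 + 2 * γ + 3) * z + 3 * (γ ^ 2 + 3) with hC
  set D : ℝ := γ * (γ + 1) * (2 * z ^ 3 + 3 * (γ + 1) * z ^ 2 + 3 * (γ + 1) * z + 2 * γ) with hD
  set f : ℝ → ℝ := fun w => 4 * w ^ 3 - B * w ^ 2 + C * w - D with hf
  clear_value B C D f
  have hγ0 : (0:ℝ) < γ := by linarith
  have hCpos : 0 < C := by rw [hC]; nlinarith [sq_nonneg γ, sq_nonneg z, mul_pos hz hz]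
  have hE : 0 < 2 * z ^ 3 + 3 * (γ + 1) * z ^ 2 + 3 * (γ + 1) * z + 2 * γ := by
    have h1 : 0 < z ^ 3 := pow_pos hz 3
    have h2 : 0 < (γ + 1) * z ^ 2 := mul_pos (by linarith) (pow_pos hz 2)
    have h3 : 0 < (γ + 1) * z := mul_pos (by linarith) hz
    nlinarith
  have hDpos : 0 < D := by
    rw [hD]; exact mul_pos (mul_pos hγ0 (by linarith)) hE
  have hBpos : 0 < B := by rw [hB]; nlinarith
  -- strict monotonicity
  have htail : 0 < (γ - 1) ^ 2 * z ^ 2 + (3 * γ + 1) * (γ - 1) * z + (γ ^ 2 - 1) := by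
    nlinarith [sq_nonneg ((γ - 1) * z), mul_pos hz hγ0]
  have hmono : ∀ a b : ℝ, a < b → f a < f b := by
    intro a b hab
    have h1 : 0 ≤ (b - a) * (a - b) ^ 2 := mul_nonneg (by linarith) (sq_nonneg _)
    have h2 : 0 ≤ (b - a) * (a + b - ((γ + 1) * z + 2)) ^ 2 :=
      mul_nonneg (by linarith) (sq_nonneg _)
    have h3 : 0 < (b - a) *
        ((γ - 1) ^ 2 * z ^ 2 + (3 * γ + 1) * (γ - 1) * z + (γ ^ 2 - 1)) :=
      mul_pos (by linarith) htail
    simp only [hf, hB, hC, hD]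
    nlinarith [h1, h2, h3]
  have hf0 : f 0 < 0 := by
    simp only [hf]
    nlinarith [hDpos]
  -- a point where f is positive
  obtain ⟨M, hMB, hMD, hM1⟩ : ∃ M : ℝ, B ≤ M ∧ D ≤ M ∧ 1 ≤ M :=
    ⟨max B (max D 1), le_max_left _ _,
      le_trans (le_max_left _ _) (le_max_right _ _),
      le_trans (le_max_right _ _) (le_max_right _ _)⟩
  have hMpos : 0 < M := by linarith
  have hfM : 0 < f M := by
    have h4 : 0 ≤ M ^ 2 * (M - B) := mul_nonneg (sq_nonneg M) (by linarith)
    have hM3 : M ≤ M ^ 3 := by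
      calc M = M ^ 1 := (pow_one M).symm
        _ ≤ M ^ 3 := pow_le_pow_right₀ hM1 (by norm_num)
    have h5 : 0 < C * M := mul_pos hCpos hMpos
    have h6 : 0 < M ^ 3 := pow_pos hMpos 3
    simp only [hf]
    linarith [h4, hM3, h5, h6]
  have hcont : ContinuousOn f (Set.Icc 0 M) := by
    apply Continuous.continuousOn; rw [hf]; fun_prop
  have hsub : Set.Icc (f 0) (f M) ⊆ f '' Set.Icc 0 M :=
    intermediate_value_Icc hMpos.le hcont
  obtain ⟨wP, hwPmem, hwP0⟩ := hsub ⟨hf0.le, hfM.le⟩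
  have hfe : ∀ w : ℝ, 4 * w ^ 3 - B * w ^ 2 + C * w - D = f w := fun w => by rw [hf]
  have hwPpos : 0 < wP := by
    rcases lt_trichotomy wP 0 with h' | h' | h'
    · have := hmono wP 0 h'; rw [hwP0] at this; linarith
    · rw [h'] at hwP0; exact absurd hwP0 (ne_of_lt hf0)
    · exact h'
  refine ⟨wP, hwPpos, ?_, ?_, ?_, ?_⟩
  · rw [hfe]; exact hwP0
  · intro w hw hfw
    rw [hfe] at hfw
    rcases lt_trichotomy w wP with h | h | h
    · have := hmono w wP h; rw [hfw, hwP0] at this; exact absurd this (lt_irrefl 0)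
    · exact h
    · have := hmono wP w h; rw [hfw, hwP0] at this; exact absurd this (lt_irrefl 0)
  · intro w hw hlt
    rw [hfe]
    have := hmono w wP hlt; rw [hwP0] at this; exact this
  · intro w hlt
    rw [hfe]
    have := hmono wP w hlt; rw [hwP0] at this; exact this
end

section
/- Fix an adiabatic index γ with 1 < γ ≤ 5/3 and let w > 0, z > 0. Define M(w,z) = 2(γ−1)w² + (γ²−2γ+3)w − γ(γ+1)(z+γ), N(w,z) = 2((γ−1)z+γ)w − γ(γ+1)(z+1), g(w,z) = √((z+w+γ)² − 4(z+1)w) (well defined since (z+w+γ)² − 4(z+1)w = (z−w+γ)² + 4w(γ−1) > 0), L(w,z) = ((z+w+γ) − g(w,z))/2, the Riemann invariant R(w,z) = M(w,z)L(w,z) − w·N(w,z), Q(w,z) = M(w,z)(z+w+γ) − 2w·N(w,z), and P(w,z) = 4w³ − (6(γ+1)z+12)w² + (6(γ²+1)z² + 3(3γ²+2γ+3)z + 3(γ²+3))w − γ(γ+1)(2z³ + 3(γ+1)z² + 3(γ+1)z + 2γ). Then the two identities R(w,z) = (Q(w,z) − M(w,z)g(w,z))/2 and 2(γ−1)w²·P(w,z)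 = −(M(w,z)g(w,z) + Q(w,z))·R(w,z) hold. -/
/-- the two alternative expressions for the Riemann invariant,
R = (Q − M g)/2 and 2(γ−1)w²P = −(M g + Q)·R. -/
theorem riemann_invariant_alt_expressions
    (γ w z : ℝ) (hγ1 : 1 < γ) (hγ2 : γ ≤ 5 / 3) (hw : 0 < w) (hz : 0 < z) :
    let M : ℝ := 2 * (γ - 1) * w ^ 2 + (γ ^ 2 - 2 * γ + 3) * w - γ * (γ + 1) * (z + γ)
    let N : ℝ := 2 * ((γ - 1) * z + γ) * w - γ * (γ + 1) * (z + 1)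
    let g : ℝ := Real.sqrt ((z + w + γ) ^ 2 - 4 * (z + 1) * w)
    let L : ℝ := ((z + w + γ) - g) / 2
    let R : ℝ := M * L - w * N
    let Q : ℝ := M * (z + w + γ) - 2 * w * N
    let P : ℝ := 4 * w ^ 3 - (6 * (γ + 1) * z + 12) * w ^ 2
      + (6 * (γ ^ 2 + 1) * z ^ 2 + 3 * (3 * γ ^ 2 + 2 * γ + 3) * z + 3 * (γ ^ 2 + 3)) * w
      - γ * (γ + 1) * (2 * z ^ 3 + 3 * (γ + 1) * z ^ 2 + 3 * (γ + 1) * z + 2 * γ)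
    R = (Q - M * g) / 2 ∧ 2 * (γ - 1) * w ^ 2 * P = -((M * g + Q) * R) := by
  intro M N g L R Q P
  have hnn : (0:ℝ) ≤ (z + w + γ) ^ 2 - 4 * (z + 1) * w := by
    nlinarith [sq_nonneg (z - w + γ), mul_pos hw (sub_pos.mpr hγ1)]
  have hg : g ^ 2 = (z + w + γ) ^ 2 - 4 * (z + 1) * w := Real.sq_sqrt hnn
  have h1 : R = (Q - M * g) / 2 := by simp only [R, L, Q]; ring
  refine ⟨h1, ?_⟩
  rw [h1]
  simp only [M, N, Q, P]
  linear_combination (-((2 * (γ - 1) * w ^ 2 + (γ ^ 2 - 2 * γ + 3) * w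
    - γ * (γ + 1) * (z + γ)) ^ 2) / 2) * hg
end

section
/- Fix an adiabatic index γ with 1 < γ ≤ 5/3. For all w > 0 and z > 0, define M(w,z) = 2(γ−1)w² + (γ²−2γ+3)w − γ(γ+1)(z+γ), N(w,z) = 2((γ−1)z+γ)w − γ(γ+1)(z+1), and L(w,z) = ((z+w+γ) − √((z+w+γ)² − 4(z+1)w))/2 (well defined since (z+w+γ)² − 4(z+1)w = (z−w+γ)² + 4w(γ−1) > 0). Then the Riemann invariant R(w,z) := M(w,z)·L(w,z) − w·N(w,z) satisfies R(w,z) < 0 for all w > 0 and z > 0. -/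
set_option maxHeartbeats 1600000 in
/-- negativity of the Riemann invariant R(w,z) = M·L − w·N for all
w, z > 0 and adiabatic index γ ∈ (1, 5/3]. -/
theorem riemann_invariant_negative (γ : ℝ) (hγ1 : 1 < γ) (hγ2 : γ ≤ 5 / 3) :
    ∀ w z : ℝ, 0 < w → 0 < z →
      (2 * (γ - 1) * w ^ 2 + (γ ^ 2 - 2 * γ + 3) * w - γ * (γ + 1) * (z + γ))
          * (((z + w + γ) - Real.sqrt ((z + w + γ) ^ 2 - 4 * (z + 1) * w)) / 2)
        - w * (2 * ((γ - 1) * z + γ) * w - γ * (γ + 1) * (z + 1)) < 0 := by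
  intro w z hw hz
  have he : (0:ℝ) < γ - 1 := by linarith
  have hz1 : (0:ℝ) < z + 1 := by linarith
  have hD : 0 < (z + w + γ) ^ 2 - 4 * (z + 1) * w := by
    nlinarith [sq_nonneg (z - w + γ), mul_pos hw he]
  set r : ℝ := Real.sqrt ((z + w + γ) ^ 2 - 4 * (z + 1) * w) with hrdef
  have hr2 : r ^ 2 = (z + w + γ) ^ 2 - 4 * (z + 1) * w := Real.sq_sqrt hD.le
  have hr0 : 0 < r := Real.sqrt_pos.mpr hD
  have hs : 0 < z + w + γ := by linarith
  have hrs : r < z + w + γ := by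
    nlinarith [hr2, hr0, mul_pos hz1 hw]
  have hL : 0 < (z + w + γ - r) / 2 := by linarith
  have hu : 0 < (z + 2 - w - γ + r) / 2 := by
    rcases le_or_gt (w + γ - z - 2) 0 with h | h
    · linarith
    · nlinarith [hr2, hr0, mul_pos hz1 he]
  have key :
      ((2 * (γ - 1) * w ^ 2 + (γ ^ 2 - 2 * γ + 3) * w - γ * (γ + 1) * (z + γ))
          * (((z + w + γ) - r) / 2)
        - w * (2 * ((γ - 1) * z + γ) * w - γ * (γ + 1) * (z + 1)))
        * ((z + 2 - w - γ + r) / 2) ^ 2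
      = -((γ - 1) * ((z + w + γ - r) / 2) ^ 2
          * (2 * ((z + 2 - w - γ + r) / 2) ^ 3
            + 3 * (γ - 1) * ((z + 2 - w - γ + r) / 2) ^ 2
            - 3 * (γ - 1) * ((z + 2 - w - γ + r) / 2)
            + 2 * (γ - 1))) := by
    linear_combination
      ((-3/8:ℝ)*r + (-3/16:ℝ)*r^2 + (-1/16:ℝ)*r^3 + (5/8:ℝ)*γ + (3/4:ℝ)*γ*r
        + (5/16:ℝ)*γ*r^2 + (1/16:ℝ)*γ*r^3 + (-5/16:ℝ)*γ^2 + (-3/16:ℝ)*γ^2*r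
        + (-1/8:ℝ)*γ^2*r^2 + (-1/16:ℝ)*γ^3 + (1/16:ℝ)*γ^3*r + (3/8:ℝ)*z
        + (-1/16:ℝ)*z*r^2 + (1/8:ℝ)*z*γ + (1/4:ℝ)*z*γ*r + (1/16:ℝ)*z*γ*r^2
        + (1/16:ℝ)*z*γ^2 + (-1/16:ℝ)*z*γ^3 + (3/16:ℝ)*z^2 + (1/16:ℝ)*z^2*r
        + (-1/16:ℝ)*z^2*γ + (-1/16:ℝ)*z^2*γ*r + (1/8:ℝ)*z^2*γ^2 + (1/16:ℝ)*z^3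
        + (-1/16:ℝ)*z^3*γ + (3/8:ℝ)*w + (5/8:ℝ)*w*r + (5/16:ℝ)*w*r^2
        + (-3/2:ℝ)*w*γ + (-11/8:ℝ)*w*γ*r + (-5/16:ℝ)*w*γ*r^2 + (13/16:ℝ)*w*γ^2
        + (1/2:ℝ)*w*γ^2*r + (-3/16:ℝ)*w*γ^3 + (1/4:ℝ)*w*z + (3/8:ℝ)*w*z*r
        + (-1:ℝ)*w*z*γ + (-3/8:ℝ)*w*z*γ*r + (1/4:ℝ)*w*z*γ^2 + (1/16:ℝ)*w*z^2
        + (-1/16:ℝ)*w*z^2*γ + (-7/16:ℝ)*w^2 + (-7/16:ℝ)*w^2*r + (17/16:ℝ)*w^2*γ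
        + (7/16:ℝ)*w^2*γ*r + (-3/8:ℝ)*w^2*γ^2 + (-5/16:ℝ)*w^2*z
        + (5/16:ℝ)*w^2*z*γ + (3/16:ℝ)*w^3 + (-3/16:ℝ)*w^3*γ) * hr2
  have hK3 : 0 < 2 * ((z + 2 - w - γ + r) / 2) ^ 3
      + 3 * (γ - 1) * ((z + 2 - w - γ + r) / 2) ^ 2
      - 3 * (γ - 1) * ((z + 2 - w - γ + r) / 2) + 2 * (γ - 1) := by
    nlinarith [mul_nonneg he.le (sq_nonneg ((z + 2 - w - γ + r) / 2 - 1)),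
      mul_nonneg he.le (sq_nonneg ((z + 2 - w - γ + r) / 2)),
      pow_pos hu 3, he]
  have hpos : 0 < (γ - 1) * ((z + w + γ - r) / 2) ^ 2
      * (2 * ((z + 2 - w - γ + r) / 2) ^ 3
        + 3 * (γ - 1) * ((z + 2 - w - γ + r) / 2) ^ 2
        - 3 * (γ - 1) * ((z + 2 - w - γ + r) / 2)
        + 2 * (γ - 1)) :=
    mul_pos (mul_pos he (pow_pos hL 2)) hK3
  have hneg :
      ((2 * (γ - 1) * w ^ 2 + (γ ^ 2 - 2 * γ + 3) * w - γ * (γ + 1) * (z + γ))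
          * (((z + w + γ) - r) / 2)
        - w * (2 * ((γ - 1) * z + γ) * w - γ * (γ + 1) * (z + 1)))
        * ((z + 2 - w - γ + r) / 2) ^ 2 < 0 := by
    rw [key]; linarith
  by_contra hcon
  push_neg at hcon
  exact absurd (mul_nonneg hcon (sq_nonneg ((z + 2 - w - γ + r) / 2))) (not_le.mpr hneg)
end

section
/- Fix an adiabatic index γ with 1 < γ ≤ 5/3 and let z > 0. Define Q(w,z) = 2(γ−1)w³ − (2(γ−1)z + 8γ − 3γ² − 3)w² + ((2γ² − γ + 3)z + γ(5−γ))w − γ(γ+1)(z+γ)², a₀(γ) = 9γ⁴ − 42γ³ + 46γ² − 18γ + 9, Δ(γ) = 3(36γ⁴ − 96γ³ + 179γ² − 166γ + 63), and z± = (12γ² − 19γ + 15 ± √Δ(γ)) / (4(γ−1)). Then Δ(γ) > 0 (so z₋ and z₊ are real with z₋ < z₊), and the function w ↦ Q(w,z) is monotonically increasing on (0, +∞) if and only if either (a) a₀(γ) > 0 and z₋ ≤ z ≤ z₊, or (b) a₀(γ) ≤ 0 and 0 < z ≤ z₊. -/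
/-!
The derivative of `Q(·, z)` is the quadratic `6(γ-1)w² - 2Bw + C` with
`B = 2(γ-1)z + 8γ - 3γ² - 3 > 0` and `C = (2γ²-γ+3)z + γ(5-γ)`, whose vertex `B / (6(γ-1))` lies in `(0, ∞)`, so `Q(·, z)` is
monotone there iff `B² ≤ 6(γ-1)C`. The identity `4(B² - 6(γ-1)C) = (4(γ-1)z - p)² - Δ` with
`p = 12γ² - 19γ + 15` turns this into `z₋ ≤ z ≤ z₊`, and `p² - Δ = 4a₀` shows that `z₋ ≤ 0`
exactly when `a₀ ≤ 0`, in which case the lower bound is automatic.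
-/

open Set

lemma monotoneOn_iff_forall_hasDerivAt_nonneg {D : Set ℝ} (hD : Convex ℝ D) (hDo : IsOpen D)
    {f f' : ℝ → ℝ} (hf : ∀ x ∈ D, HasDerivAt f (f' x) x) :
    MonotoneOn f D ↔ ∀ x ∈ D, 0 ≤ f' x := by
  refine ⟨fun hm x hx => (hf x hx).hasDerivWithinAt.nonneg_of_monotoneOn (hDo.preperfect x hx) hm,
    fun hf'₀ => ?_⟩
  rw [← hDo.interior_eq] at hf hf'₀
  refine monotoneOn_of_hasDerivWithinAt_nonneg hD ?_ (fun x hx => (hf x hx).hasDerivWithinAt) hf'₀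
  intro x hx
  rw [← hDo.interior_eq] at hx
  exact (hf x hx).continuousAt.continuousWithinAt

lemma forall_pos_quadratic_nonneg_iff {a b c : ℝ} (ha : 0 < a) (hb : 0 < b) :
    (∀ x > 0, 0 ≤ a * x ^ 2 - 2 * b * x + c) ↔ b ^ 2 ≤ a * c := by
  constructor
  · intro h
    have hvertex := h (b / a) (div_pos hb ha)
    have : a * (b / a) ^ 2 - 2 * b * (b / a) + c = (a * c - b ^ 2) / a := by
      field_simp
      ring
    rw [this] at hvertex
    linarith [(le_div_iff₀ ha).mp hvertex]
  · intro h x _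
    have : a * (a * x ^ 2 - 2 * b * x + c) = (a * x - b) ^ 2 + (a * c - b ^ 2) := by ring
    exact nonneg_of_mul_nonneg_right (this ▸ add_nonneg (sq_nonneg _) (sub_nonneg.mpr h)) ha

lemma monotoneOn_Ioi_cubic_iff {a b c d : ℝ} (ha : 0 < a) (hb : 0 < b) :
    MonotoneOn (fun w => a * w ^ 3 - b * w ^ 2 + c * w - d) (Ioi 0) ↔ b ^ 2 ≤ 3 * a * c := by
  have hderiv : ∀ w ∈ Ioi (0 : ℝ), HasDerivAt (fun w => a * w ^ 3 - b * w ^ 2 + c * w - d)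
      (3 * a * w ^ 2 - 2 * b * w + c) w := by
    intro w _
    refine ((((hasDerivAt_pow 3 w).const_mul a).sub ((hasDerivAt_pow 2 w).const_mul b)).add
      ((hasDerivAt_id' w).const_mul c)).sub_const d |>.congr_deriv ?_
    norm_num
    ring
  rw [monotoneOn_iff_forall_hasDerivAt_nonneg (convex_Ioi 0) isOpen_Ioi hderiv]
  exact forall_pos_quadratic_nonneg_iff (by positivity) hb

lemma sq_mul_sub_le_iff {k p Δ z : ℝ} (hk : 0 < k) (hΔ : 0 ≤ Δ) :
    (k * z - p) ^ 2 ≤ Δ ↔ (p - √Δ) / k ≤ z ∧ z ≤ (p + √Δ) / k := by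
  rw [Real.sq_le hΔ, div_le_iff₀ hk, le_div_iff₀ hk]
  constructor <;> rintro ⟨h₁, h₂⟩ <;> constructor <;> linarith

lemma sub_sqrt_div_nonpos_iff {k p Δ : ℝ} (hk : 0 < k) (hp : 0 < p) :
    (p - √Δ) / k ≤ 0 ↔ p ^ 2 ≤ Δ := by
  rw [div_nonpos_iff, sub_nonpos, Real.le_sqrt' hp]
  constructor
  · rintro (⟨-, hk'⟩ | ⟨h, -⟩)
    exacts [absurd hk' hk.not_ge, h]
  · exact fun h => .inr ⟨h, hk.le⟩

/-- characterization of monotonicity of the auxiliary cubic Q(·,z) on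
(0, ∞) in terms of the sign of a₀(γ) and the position of z relative to z₋, z₊. -/
theorem Q_monotone_iff (γ z : ℝ) (hγ1 : 1 < γ) (hγ2 : γ ≤ 5 / 3) (hz : 0 < z) :
    let Δ : ℝ := 3 * (36 * γ ^ 4 - 96 * γ ^ 3 + 179 * γ ^ 2 - 166 * γ + 63)
    let zm : ℝ := (12 * γ ^ 2 - 19 * γ + 15 - Real.sqrt Δ) / (4 * (γ - 1))
    let zp : ℝ := (12 * γ ^ 2 - 19 * γ + 15 + Real.sqrt Δ) / (4 * (γ - 1))
    let a0 : ℝ := 9 * γ ^ 4 - 42 * γ ^ 3 + 46 * γ ^ 2 - 18 * γ + 9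
    0 < Δ ∧ zm < zp ∧
      (MonotoneOn (fun w : ℝ =>
          2 * (γ - 1) * w ^ 3 - (2 * (γ - 1) * z + 8 * γ - 3 * γ ^ 2 - 3) * w ^ 2
            + ((2 * γ ^ 2 - γ + 3) * z + γ * (5 - γ)) * w - γ * (γ + 1) * (z + γ) ^ 2)
          (Set.Ioi 0)
        ↔ (0 < a0 ∧ zm ≤ z ∧ z ≤ zp) ∨ (a0 ≤ 0 ∧ z ≤ zp)) := by
  intro Δ zm zp a0
  have hγ : 0 < γ - 1 := by linarith
  have hΔ : 0 < Δ := by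
    nlinarith [sq_nonneg (γ - 1), pow_pos hγ 3, pow_pos hγ 4]
  have hp : 0 < 12 * γ ^ 2 - 19 * γ + 15 := by nlinarith [sq_nonneg (24 * γ - 19)]
  have hB : 0 < 2 * (γ - 1) * z + 8 * γ - 3 * γ ^ 2 - 3 := by
    nlinarith [mul_pos hγ hz, mul_nonneg (by linarith : (0 : ℝ) ≤ 5 - 3 * γ) hγ.le]
  have hdisc : (2 * (γ - 1) * z + 8 * γ - 3 * γ ^ 2 - 3) ^ 2
        ≤ 3 * (2 * (γ - 1)) * ((2 * γ ^ 2 - γ + 3) * z + γ * (5 - γ))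
      ↔ (4 * (γ - 1) * z - (12 * γ ^ 2 - 19 * γ + 15)) ^ 2 ≤ Δ := by
    constructor <;> intro h <;> linarith
  have hzm : zm ≤ 0 ↔ a0 ≤ 0 := by
    rw [sub_sqrt_div_nonpos_iff (by positivity) hp]
    constructor <;> intro h <;> linarith
  refine ⟨hΔ, div_lt_div_of_pos_right (by linarith [Real.sqrt_pos.2 hΔ]) (by positivity), ?_⟩
  rw [monotoneOn_Ioi_cubic_iff (by positivity) hB, hdisc, sq_mul_sub_le_iff (by positivity) hΔ.le]
  constructor
  · rintro ⟨h₁, h₂⟩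
    by_cases ha : 0 < a0
    exacts [.inl ⟨ha, h₁, h₂⟩, .inr ⟨not_lt.1 ha, h₂⟩]
  · rintro (⟨-, h₁, h₂⟩ | ⟨ha, h₂⟩)
    exacts [⟨h₁, h₂⟩, ⟨(hzm.2 ha).trans hz.le, h₂⟩]
end
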